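/- Consider the block-structured problem where x = (x_1,…,x_n), h(x) = ∑_{i=1}^n h_i(x_i), and A = [A_1,…,A_n]. Fix (x^k, y^k, z^k) with z^k ≥ 0 componentwise and r^k = Ax^k − b. For each i ∈ {1,…,n}, let x^{k+1}(i) agree with x^k on all blocks except block i, where x_i^{k+1}(i) minimizes over x_i the function h_i(x_i) + ⟨∇_{x_i} F_β(x^k,y^k,z^k), x_i⟩ + (η_i/2)‖x_i − x_i^k‖²; let r^{k+1}(i) = Ax^{k+1}(i) − b and y^{k+1}(i) = y^k + ρ_y r^{k+1}(i). Assume for each i there is ℓ_i^k ≥ 0 such that for all x and all block-i directions d, g(x + U_i d) + Ψ_β(x + U_i d, z^k) ≤ g(x) + Ψ_β(x, z^k) + ⟨∇_{x_i}(g + Ψ_β(·, z^k))(x), d⟩ + (ℓ_i^k/2)‖d‖², where U_i d places d in block i and zeros elsewhere. Then for every x with Ax = b and f_j(x) ≤ 0 for all j: (1/n)∑_{i=1}^n [ f_0(x^{k+1}(i)) − f_0(x) + ⟨y^{k+1}(i), r^{k+1}(i)⟩ + (β − ρ_y)‖r^{k+1}(i)‖² + Ψ_β(x^{k+1}(i),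 z^k) + (1/2)(‖x^{k+1}(i) − x‖²_η − ‖x^k − x‖²_η + ‖x^{k+1}(i) − x^k‖²_{η − ℓ^k}) − (β/2)(‖r^{k+1}(i)‖² − ‖r^k‖² + ‖A(x^{k+1}(i) − x^k)‖²) ] ≤ (1 − 1/n)·[ f_0(x^k) − f_0(x) + ⟨y^k, r^k⟩ + β‖r^k‖² + Ψ_β(x^k, z^k) ], where ‖u‖²_η = ∑_i η_i‖u_i‖² and ‖u‖²_{η−ℓ^k} = ∑_i (η_i − ℓ_i^k)‖u_i‖². -/

import Mathlib

/-!
Fix a feasible `x`. For each block `i`, the blockwise descent inequality controls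
`g + Ψ_β(·, z^k)` at `x^{k+1}(i)`, and the three-point inequality of the proximal step (with `x_i`
as comparison point) controls `h_i`. Writing `r^{k+1}(i) = r^k + A_i (x_i^{k+1} - x_i^k)`, the
`i`-th summand is at most the right-hand bracket `C` plus a gap `D_i` made of
`h_i(x_i) - h_i(x_i^k)` and the block-`i` part of the linearization of the augmented Lagrangian
at `x^k` in the direction `x - x^k`. Summed over `i`, these linearizations assemble into full
gradients, so convexity of `g` and of `Ψ_β(·, z^k)`, together with `Ψ_β(x, z^k) ≤ 0` and
`Ax = b`, give `∑ D_i ≤ -C`; averaging then yields the factor `1 - 1/n`.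
-/

open scoped RealInnerProductSpace

noncomputable section

/-- The function `ψ_β(u,v)` used in the classic augmented Lagrangian. -/
def psi (β u v : ℝ) : ℝ :=
  if 0 ≤ β * u + v then u * v + β / 2 * u ^ 2 else -(v ^ 2) / (2 * β)

/-- `Ψ_β(x,z) = ∑_j ψ_β(f_j(x), z_j)`. -/
def PsiAug {m : ℕ} {E : Type*} (β : ℝ) (f : Fin m → E → ℝ) (x : E)
    (z : EuclideanSpace ℝ (Fin m)) : ℝ :=
  ∑ j, psi β (f j x) (z j)

/-- The block-structured primal space `x = (x_1,…,x_n)` with the Euclidean (ℓ²) product norm. -/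
abbrev EB {n : ℕ} (d : Fin n → ℕ) := PiLp 2 (fun i : Fin n => EuclideanSpace ℝ (Fin (d i)))

/-- `U_i ξ`: the element of the product space whose block `i` is `ξ` and whose other blocks
are zero. -/
def blockSingle {n : ℕ} {d : Fin n → ℕ} (i : Fin n) (ξ : EuclideanSpace ℝ (Fin (d i))) : EB d :=
  WithLp.toLp 2 (Pi.single (M := fun j => EuclideanSpace ℝ (Fin (d j))) i ξ)

/-- `A x = ∑_i A_i x_i` for the block matrix `A = [A_1,…,A_n]`. -/
def Amul {n q : ℕ} {d : Fin n → ℕ}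
    (A : ∀ i : Fin n, EuclideanSpace ℝ (Fin (d i)) →L[ℝ] EuclideanSpace ℝ (Fin q))
    (x : EB d) : EuclideanSpace ℝ (Fin q) :=
  ∑ i, A i (x i)

open Filter Topology Set

section Psi

variable {β : ℝ}

lemma psi_mono (hβ : 0 < β) (v : ℝ) : Monotone fun u => psi β u v := by
  intro u u' h
  simp only [psi]
  split_ifs with h1 h2 h2
  · nlinarith
  · exact absurd (by nlinarith) h2
  · rw [div_le_iff₀ (by positivity)]
    nlinarith [sq_nonneg (β * u' + v)]
  · exact le_rfl

-- `ψ_β(·, v)` is convex with derivative `max (β t + v) 0` at `t`.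
lemma psi_add_max_mul_le (hβ : 0 < β) (t s v : ℝ) :
    psi β t v + max (β * t + v) 0 * (s - t) ≤ psi β s v := by
  simp only [psi]
  split_ifs with h1 h2 h2
  · rw [max_eq_left h1]
    nlinarith [mul_nonneg hβ.le (sq_nonneg (s - t))]
  · rw [max_eq_left h1, le_div_iff₀ (by positivity)]
    nlinarith [mul_nonneg h1 (by linarith : 0 ≤ (β * t + v) - 2 * (β * s + v))]
  · rw [max_eq_right (by linarith), zero_mul, add_zero, div_le_iff₀ (by positivity)]
    nlinarith [sq_nonneg (β * s + v)]
  · rw [max_eq_right (by linarith), zero_mul, add_zero]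

lemma psi_nonpos (hβ : 0 ≤ β) {u v : ℝ} (hu : u ≤ 0) (hv : 0 ≤ v) : psi β u v ≤ 0 := by
  simp only [psi]
  split_ifs
  · nlinarith
  · exact div_nonpos_of_nonpos_of_nonneg (by nlinarith) (by positivity)

end Psi

theorem ConvexOn.add_inner_le_of_hasGradientAt {E : Type*} [NormedAddCommGroup E]
    [InnerProductSpace ℝ E] [CompleteSpace E] {s : Set E} {F : E → ℝ} {G x y : E}
    (hF : ConvexOn ℝ s F) (hx : x ∈ s) (hy : y ∈ s) (hG : HasGradientAt F G x) :
    F x + ⟪G, y - x⟫ ≤ F y := by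
  let L : ℝ →ᵃ[ℝ] E := AffineMap.lineMap x y
  have hderiv : HasDerivAt (F ∘ L) ⟪G, y - x⟫ 0 := by
    have hL : HasDerivAt L (y - x) 0 := AffineMap.hasDerivAt_lineMap
    simpa using hG.hasFDerivAt.comp_hasDerivAt_of_eq 0 hL (by simp [L])
  have := (hF.comp_affineMap L).le_slope_of_hasDerivAt (by simpa [L]) (by simpa [L]) one_pos hderiv
  simp only [slope, sub_zero, inv_one, Function.comp_apply, AffineMap.lineMap_apply_one,
    AffineMap.lineMap_apply_zero, vsub_eq_sub, smul_eq_mul, one_mul, L] at this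
  linarith

lemma le_of_forall_mem_Ioo_le_add_mul {a b K : ℝ} (h : ∀ t ∈ Ioo (0 : ℝ) 1, a ≤ b + t * K) :
    a ≤ b := by
  have hlim : Tendsto (fun t : ℝ => b + t * K) (𝓝[>] 0) (𝓝 b) := by
    have : Continuous fun t : ℝ => b + t * K := by fun_prop
    simpa using (this.tendsto 0).mono_left nhdsWithin_le_nhds
  exact ge_of_tendsto hlim (eventually_of_mem (Ioo_mem_nhdsGT one_pos) h)

theorem ConvexOn.three_point_of_isMinOn {E : Type*} [NormedAddCommGroup E]
    [InnerProductSpace ℝ E] {S : Set E} {h : E → ℝ} (hh : ConvexOn ℝ S h) {s x₀ p ξ : E} {c : ℝ}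
    (hp : p ∈ S) (hξ : ξ ∈ S)
    (hmin : IsMinOn (fun ξ => h ξ + ⟪s, ξ⟫ + c / 2 * ‖ξ - x₀‖ ^ 2) S p) :
    h p + ⟪s, p⟫ + c / 2 * ‖p - x₀‖ ^ 2 + c / 2 * ‖ξ - p‖ ^ 2
      ≤ h ξ + ⟪s, ξ⟫ + c / 2 * ‖ξ - x₀‖ ^ 2 := by
  set w := ξ - p
  set a := p - x₀
  -- first-order optimality: `-(s + c • (p - x₀))` is a subgradient of `h` at `p`
  have hopt : h p ≤ h ξ + ⟪s, w⟫ + c * ⟪a, w⟫ := by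
    refine le_of_forall_mem_Ioo_le_add_mul (K := c / 2 * ‖w‖ ^ 2) fun t ⟨ht0, ht1⟩ => ?_
    have hmem : (1 - t) • p + t • ξ ∈ S := hh.1 hp hξ (by linarith) ht0.le (by ring)
    have hq : (1 - t) • p + t • ξ = p + t • w := by simp only [w]; module
    have hconv := hh.2 hp hξ (by linarith : (0 : ℝ) ≤ 1 - t) ht0.le (by ring)
    have hle := isMinOn_iff.mp hmin _ hmem
    simp only [hq, smul_eq_mul] at hconv hle
    have hsq : ‖p + t • w - x₀‖ ^ 2 = ‖a‖ ^ 2 + 2 * (t * ⟪a, w⟫) + t ^ 2 * ‖w‖ ^ 2 := by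
      rw [show p + t • w - x₀ = a + t • w by simp only [a]; abel, norm_add_sq_real,
        real_inner_smul_right, norm_smul, Real.norm_eq_abs, abs_of_pos ht0]
      ring
    rw [inner_add_right, real_inner_smul_right, hsq] at hle
    nlinarith
  have hsq : ‖ξ - x₀‖ ^ 2 = ‖a‖ ^ 2 + 2 * ⟪a, w⟫ + ‖w‖ ^ 2 := by
    rw [show ξ - x₀ = a + w by simp only [a, w]; abel, norm_add_sq_real]
  have hlin : ⟪s, ξ⟫ = ⟪s, p⟫ + ⟪s, w⟫ := by simp only [w, inner_sub_right]; ring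
  rw [hsq, hlin]
  linarith

/-- `Φ₀` and `Φ₁` stand for the smooth part `g + Ψ_β(·, z)` before and after the step. -/
theorem linearized_prox_step_le {E F : Type*} [NormedAddCommGroup E] [InnerProductSpace ℝ E]
    [CompleteSpace E] [NormedAddCommGroup F] [InnerProductSpace ℝ F] [CompleteSpace F]
    {h : E → ℝ} (hh : ConvexOn ℝ univ h) (A : E →L[ℝ] F) {β η ℓ Φ₀ Φ₁ : ℝ} {s u v w : E} {y r : F}
    (hdesc : Φ₁ ≤ Φ₀ + ⟪s, u - v⟫ + ℓ / 2 * ‖u - v‖ ^ 2)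
    (hmin : ∀ ξ, h u + ⟪s + ContinuousLinearMap.adjoint A (y + β • r), u⟫ + η / 2 * ‖u - v‖ ^ 2
      ≤ h ξ + ⟪s + ContinuousLinearMap.adjoint A (y + β • r), ξ⟫ + η / 2 * ‖ξ - v‖ ^ 2) :
    Φ₁ + h u + ⟪y, r + A (u - v)⟫ + β * ‖r + A (u - v)‖ ^ 2
        + 1 / 2 * (η * ‖u - w‖ ^ 2 - η * ‖v - w‖ ^ 2 + (η - ℓ) * ‖u - v‖ ^ 2)
        - β / 2 * (‖r + A (u - v)‖ ^ 2 - ‖r‖ ^ 2 + ‖A (u - v)‖ ^ 2)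
      ≤ Φ₀ + h w + ⟪s, w - v⟫ + ⟪y, r⟫ + β * ‖r‖ ^ 2 + ⟪y + β • r, A (w - v)⟫ := by
  have h3 := hh.three_point_of_isMinOn (mem_univ u) (mem_univ w)
    (isMinOn_univ_iff.mpr hmin)
  rw [norm_sub_rev w u, norm_sub_rev w v] at h3
  simp only [inner_add_left, inner_add_right, inner_sub_right,
    ContinuousLinearMap.adjoint_inner_left, real_inner_smul_left, map_sub] at h3 hdesc ⊢
  rw [norm_add_sq_real, inner_sub_right]
  linarith

section PsiAug

variable {β : ℝ} {m : ℕ} {E : Type*}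

lemma psiAug_nonpos (hβ : 0 ≤ β) {f : Fin m → E → ℝ} {x : E} {z : EuclideanSpace ℝ (Fin m)}
    (hf : ∀ j, f j x ≤ 0) (hz : ∀ j, 0 ≤ z j) : PsiAug β f x z ≤ 0 :=
  Finset.sum_nonpos fun j _ => psi_nonpos hβ (hf j) (hz j)

lemma psiAug_add_inner_le [NormedAddCommGroup E] [InnerProductSpace ℝ E] [CompleteSpace E]
    (hβ : 0 < β) {s : Set E} {f : Fin m → E → ℝ} {G : Fin m → E} {x₀ x : E}
    (z : EuclideanSpace ℝ (Fin m)) (hf : ∀ j, ConvexOn ℝ s (f j)) (hx₀ : x₀ ∈ s) (hx : x ∈ s)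
    (hG : ∀ j, HasGradientAt (f j) (G j) x₀) :
    PsiAug β f x₀ z + ⟪∑ j, max (β * f j x₀ + z j) 0 • G j, x - x₀⟫ ≤ PsiAug β f x z := by
  simp only [PsiAug, sum_inner, real_inner_smul_left, ← Finset.sum_add_distrib]
  refine Finset.sum_le_sum fun j _ => ?_
  have hlin := (hf j).add_inner_le_of_hasGradientAt hx₀ hx (hG j)
  calc psi β (f j x₀) (z j) + max (β * f j x₀ + z j) 0 * ⟪G j, x - x₀⟫
      ≤ psi β (f j x₀ + ⟪G j, x - x₀⟫) (z j) := by
        simpa using psi_add_max_mul_le hβ (f j x₀) (f j x₀ + ⟪G j, x - x₀⟫) (z j)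
    _ ≤ psi β (f j x) (z j) := psi_mono hβ (z j) (by linarith)

end PsiAug

lemma Fintype.sum_eq_sum_add_sub_of_forall_ne {ι M : Type*} [Fintype ι] [AddCommGroup M]
    {F K : ι → M} (i : ι) (hFK : ∀ j, j ≠ i → F j = K j) :
    ∑ j, F j = ∑ j, K j + (F i - K i) := by
  rw [← sub_eq_iff_eq_add', ← Finset.sum_sub_distrib]
  exact Fintype.sum_eq_single i fun j hj => by rw [hFK j hj, sub_self]

section Blocks

variable {n q m : ℕ} {d : Fin n → ℕ}

lemma add_blockSingle_sub_of_forall_ne {x x' : EB d} {i : Fin n}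
    (hx' : ∀ j, j ≠ i → x' j = x j) :
    x + blockSingle i (x' i - x i) = x' := by
  ext j : 1
  by_cases hj : j = i
  · subst hj
    simp [blockSingle]
  · simp [blockSingle, Pi.single_eq_of_ne hj, hx' j hj]

lemma amul_sub (A : ∀ i : Fin n, EuclideanSpace ℝ (Fin (d i)) →L[ℝ] EuclideanSpace ℝ (Fin q))
    (x y : EB d) : Amul A (x - y) = Amul A x - Amul A y := by
  simp [Amul, Finset.sum_sub_distrib]

lemma amul_sub_of_forall_ne
    (A : ∀ i : Fin n, EuclideanSpace ℝ (Fin (d i)) →L[ℝ] EuclideanSpace ℝ (Fin q))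
    {x x' : EB d} {i : Fin n} (hx' : ∀ j, j ≠ i → x' j = x j) :
    Amul A (x' - x) = A i (x' i - x i) := by
  simp only [Amul, PiLp.sub_apply]
  exact Fintype.sum_eq_single i fun j hj => by rw [hx' j hj, sub_self, map_zero]

theorem sum_block_linearization_le {β : ℝ} (hβ : 0 < β) {g : EB d → ℝ} {f : Fin m → EB d → ℝ}
    {G : EB d} {Gf : Fin m → EB d}
    {A : ∀ i : Fin n, EuclideanSpace ℝ (Fin (d i)) →L[ℝ] EuclideanSpace ℝ (Fin q)}
    {b y : EuclideanSpace ℝ (Fin q)} {z : EuclideanSpace ℝ (Fin m)} {x₀ x : EB d}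
    (hg : ConvexOn ℝ univ g) (hf : ∀ j, ConvexOn ℝ univ (f j)) (hG : HasGradientAt g G x₀)
    (hGf : ∀ j, HasGradientAt (f j) (Gf j) x₀) (hz : ∀ j, 0 ≤ z j)
    (hx : Amul A x = b) (hfx : ∀ j, f j x ≤ 0) :
    ∑ i, (⟪G i + ∑ j, max (β * f j x₀ + z j) 0 • Gf j i, x i - x₀ i⟫
        + ⟪y + β • (Amul A x₀ - b), A i (x i - x₀ i)⟫)
      ≤ g x - g x₀ - PsiAug β f x₀ z - ⟪y, Amul A x₀ - b⟫ - β * ‖Amul A x₀ - b‖ ^ 2 := by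
  have hsmooth : ∑ i, ⟪G i + ∑ j, max (β * f j x₀ + z j) 0 • Gf j i, x i - x₀ i⟫
      = ⟪G, x - x₀⟫ + ⟪∑ j, max (β * f j x₀ + z j) 0 • Gf j, x - x₀⟫ := by
    rw [← inner_add_left, PiLp.inner_apply]
    simp only [PiLp.add_apply, PiLp.sub_apply, WithLp.ofLp_sum, PiLp.smul_apply, Finset.sum_apply]
  have hlin : ∑ i, ⟪y + β • (Amul A x₀ - b), A i (x i - x₀ i)⟫
      = -⟪y, Amul A x₀ - b⟫ - β * ‖Amul A x₀ - b‖ ^ 2 := by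
    have hres : ∑ i, A i (x i - x₀ i) = -(Amul A x₀ - b) := by
      rw [neg_sub, ← hx, ← amul_sub]
      simp only [Amul, PiLp.sub_apply]
    rw [← inner_sum, hres, inner_neg_right, inner_add_left, real_inner_smul_left,
      real_inner_self_eq_norm_sq]
    ring
  have hgx := hg.add_inner_le_of_hasGradientAt (mem_univ x₀) (mem_univ x) hG
  have hΨ := psiAug_add_inner_le hβ z hf (mem_univ x₀) (mem_univ x) hGf
  have hΨx := psiAug_nonpos hβ.le hfx hz
  rw [Finset.sum_add_distrib, hsmooth, hlin]
  linarith

end Blocks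

lemma one_div_mul_sum_le_of_le_add {n : ℕ} (hn : 0 < n) {T D : Fin n → ℝ} {C : ℝ}
    (hT : ∀ i, T i ≤ C + D i) (hD : ∑ i, D i ≤ -C) :
    1 / (n : ℝ) * ∑ i, T i ≤ (1 - 1 / n) * C := by
  have hsum : ∑ i, T i ≤ (n - 1) * C :=
    calc ∑ i, T i ≤ ∑ i, (C + D i) := Finset.sum_le_sum fun i _ => hT i
      _ = n * C + ∑ i, D i := by simp [Finset.sum_add_distrib]
      _ ≤ (n - 1) * C := by linarith
  have hn' : (0 : ℝ) < n := by exact_mod_cast hn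
  calc 1 / (n : ℝ) * ∑ i, T i ≤ 1 / n * ((n - 1) * C) := by gcongr
    _ = (1 - 1 / n) * C := by field_simp

theorem stmt18_general {n q m : ℕ} (d : Fin n → ℕ) (hn : 0 < n)
    (β ρy : ℝ) (hβ : 0 < β) (η ℓ : Fin n → ℝ)
    (g : EB d → ℝ) (h : ∀ i : Fin n, EuclideanSpace ℝ (Fin (d i)) → ℝ)
    (f : Fin m → EB d → ℝ)
    (g' : EB d → EB d) (f' : Fin m → EB d → EB d)
    (A : ∀ i : Fin n, EuclideanSpace ℝ (Fin (d i)) →L[ℝ] EuclideanSpace ℝ (Fin q))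
    (b : EuclideanSpace ℝ (Fin q))
    (hgconv : ConvexOn ℝ Set.univ g) (hhconv : ∀ i, ConvexOn ℝ Set.univ (h i))
    (hfconv : ∀ j, ConvexOn ℝ Set.univ (f j))
    (hg : ∀ x, HasGradientAt g (g' x) x)
    (hf : ∀ j x, HasGradientAt (f j) (f' j x) x)
    -- the current iterate `(x^k, y^k, z^k)` with `z^k ≥ 0`
    (xk : EB d) (yk : EuclideanSpace ℝ (Fin q)) (zk : EuclideanSpace ℝ (Fin m))
    (hzk : ∀ j, 0 ≤ zk j)
    -- blockwise descent property with constants `ℓ_i^k`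
    (hdesc : ∀ (i : Fin n) (x : EB d) (ξ : EuclideanSpace ℝ (Fin (d i))),
      g (x + blockSingle i ξ) + PsiAug β f (x + blockSingle i ξ) zk
        ≤ g x + PsiAug β f x zk
          + ⟪(g' x) i + ∑ j, max (β * f j x + zk j) 0 • (f' j x) i, ξ⟫
          + ℓ i / 2 * ‖ξ‖ ^ 2)
    -- the candidate updates: `x^{k+1}(i)` changes only block `i`, which solves the prox step
    (x1 : Fin n → EB d) (y1 : Fin n → EuclideanSpace ℝ (Fin q))
    (hx1 : ∀ (i : Fin n) (i' : Fin n), i' ≠ i → x1 i i' = xk i')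
    (hx1min : ∀ i : Fin n, ∀ ξ : EuclideanSpace ℝ (Fin (d i)),
      h i (x1 i i) + ⟪(g' xk) i + (ContinuousLinearMap.adjoint (A i)) (yk + β • (Amul A xk - b))
            + ∑ j, max (β * f j xk + zk j) 0 • (f' j xk) i, x1 i i⟫
          + η i / 2 * ‖x1 i i - xk i‖ ^ 2
        ≤ h i ξ + ⟪(g' xk) i + (ContinuousLinearMap.adjoint (A i)) (yk + β • (Amul A xk - b))
            + ∑ j, max (β * f j xk + zk j) 0 • (f' j xk) i, ξ⟫
          + η i / 2 * ‖ξ - xk i‖ ^ 2)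
    (hy1 : ∀ i, y1 i = yk + ρy • (Amul A (x1 i) - b)) :
    -- conclusion: for every feasible `x`
    ∀ x : EB d, Amul A x = b → (∀ j, f j x ≤ 0) →
      (1 / (n : ℝ)) * ∑ i,
          ((g (x1 i) + ∑ i', h i' (x1 i i')) - (g x + ∑ i', h i' (x i'))
            + ⟪y1 i, Amul A (x1 i) - b⟫ + (β - ρy) * ‖Amul A (x1 i) - b‖ ^ 2
            + PsiAug β f (x1 i) zk
            + 1 / 2 * ((∑ i', η i' * ‖x1 i i' - x i'‖ ^ 2) - (∑ i', η i' * ‖xk i' - x i'‖ ^ 2)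
                + ∑ i', (η i' - ℓ i') * ‖x1 i i' - xk i'‖ ^ 2)
            - β / 2 * (‖Amul A (x1 i) - b‖ ^ 2 - ‖Amul A xk - b‖ ^ 2
                + ‖Amul A (x1 i - xk)‖ ^ 2))
        ≤ (1 - 1 / (n : ℝ)) * ((g xk + ∑ i', h i' (xk i')) - (g x + ∑ i', h i' (x i'))
            + ⟪yk, Amul A xk - b⟫ + β * ‖Amul A xk - b‖ ^ 2 + PsiAug β f xk zk) := by
  intro x hx hfx
  set rk := Amul A xk - b with hrk
  refine one_div_mul_sum_le_of_le_add hn (D := fun i => h i (x i) - h i (xk i)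
      + (⟪(g' xk) i + ∑ j, max (β * f j xk + zk j) 0 • (f' j xk) i, x i - xk i⟫
        + ⟪yk + β • rk, A i (x i - xk i)⟫)) (fun i => ?_) ?_
  · have hstep := linearized_prox_step_le (hhconv i) (A i) (w := x i)
      (by simpa only [add_blockSingle_sub_of_forall_ne (hx1 i)] using
        hdesc i xk (x1 i i - xk i))
      (by simpa only [add_right_comm ((g' xk) i)] using hx1min i)
    have hr : Amul A (x1 i) - b = rk + A i (x1 i i - xk i) := by
      rw [← amul_sub_of_forall_ne A (hx1 i), amul_sub, hrk]; abel
    have hH : ∑ j, h j (x1 i j) = ∑ j, h j (xk j) + (h i (x1 i i) - h i (xk i)) :=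
      Fintype.sum_eq_sum_add_sub_of_forall_ne i fun j hj => by rw [hx1 i j hj]
    have hdist : ∑ j, η j * ‖x1 i j - x j‖ ^ 2
        = ∑ j, η j * ‖xk j - x j‖ ^ 2 + (η i * ‖x1 i i - x i‖ ^ 2 - η i * ‖xk i - x i‖ ^ 2) :=
      Fintype.sum_eq_sum_add_sub_of_forall_ne i fun j hj => by rw [hx1 i j hj]
    have hηℓ : ∑ j, (η j - ℓ j) * ‖x1 i j - xk j‖ ^ 2 = (η i - ℓ i) * ‖x1 i i - xk i‖ ^ 2 :=
      Fintype.sum_eq_single i fun j hj => by rw [hx1 i j hj, sub_self, norm_zero]; ring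
    rw [hy1 i, hr, amul_sub_of_forall_ne A (hx1 i), hH, hdist, hηℓ, inner_add_left,
      real_inner_smul_left, real_inner_self_eq_norm_sq]
    linarith
  · rw [Finset.sum_add_distrib, Finset.sum_sub_distrib]
    linarith [sum_block_linearization_le (y := yk) hβ hgconv hfconv (hg xk) (hf · xk) hzk hx hfx]

/-- one-iteration result of BLALM, written with the uniform average over the
block chosen at iteration `k`. -/
theorem stmt18 {n q m : ℕ} (d : Fin n → ℕ) (hn : 0 < n)
    (β ρy : ℝ) (hβ : 0 < β) (hρy : 0 < ρy) (η ℓ : Fin n → ℝ)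
    (hη : ∀ i, 0 < η i) (hℓ : ∀ i, 0 ≤ ℓ i)
    (g : EB d → ℝ) (h : ∀ i : Fin n, EuclideanSpace ℝ (Fin (d i)) → ℝ)
    (f : Fin m → EB d → ℝ)
    (g' : EB d → EB d) (f' : Fin m → EB d → EB d)
    (A : ∀ i : Fin n, EuclideanSpace ℝ (Fin (d i)) →L[ℝ] EuclideanSpace ℝ (Fin q))
    (b : EuclideanSpace ℝ (Fin q))
    (hgconv : ConvexOn ℝ Set.univ g) (hhconv : ∀ i, ConvexOn ℝ Set.univ (h i))
    (hfconv : ∀ j, ConvexOn ℝ Set.univ (f j))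
    (hg : ∀ x, HasGradientAt g (g' x) x)
    (hf : ∀ j x, HasGradientAt (f j) (f' j x) x)
    -- the current iterate `(x^k, y^k, z^k)` with `z^k ≥ 0`
    (xk : EB d) (yk : EuclideanSpace ℝ (Fin q)) (zk : EuclideanSpace ℝ (Fin m))
    (hzk : ∀ j, 0 ≤ zk j)
    -- blockwise descent property with constants `ℓ_i^k`
    (hdesc : ∀ (i : Fin n) (x : EB d) (ξ : EuclideanSpace ℝ (Fin (d i))),
      g (x + blockSingle i ξ) + PsiAug β f (x + blockSingle i ξ) zk
        ≤ g x + PsiAug β f x zk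
          + ⟪(g' x) i + ∑ j, max (β * f j x + zk j) 0 • (f' j x) i, ξ⟫
          + ℓ i / 2 * ‖ξ‖ ^ 2)
    -- the candidate updates: `x^{k+1}(i)` changes only block `i`, which solves the prox step
    (x1 : Fin n → EB d) (y1 : Fin n → EuclideanSpace ℝ (Fin q))
    (hx1 : ∀ (i : Fin n) (i' : Fin n), i' ≠ i → x1 i i' = xk i')
    (hx1min : ∀ i : Fin n, ∀ ξ : EuclideanSpace ℝ (Fin (d i)),
      h i (x1 i i) + ⟪(g' xk) i + (ContinuousLinearMap.adjoint (A i)) (yk + β • (Amul A xk - b))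
            + ∑ j, max (β * f j xk + zk j) 0 • (f' j xk) i, x1 i i⟫
          + η i / 2 * ‖x1 i i - xk i‖ ^ 2
        ≤ h i ξ + ⟪(g' xk) i + (ContinuousLinearMap.adjoint (A i)) (yk + β • (Amul A xk - b))
            + ∑ j, max (β * f j xk + zk j) 0 • (f' j xk) i, ξ⟫
          + η i / 2 * ‖ξ - xk i‖ ^ 2)
    (hy1 : ∀ i, y1 i = yk + ρy • (Amul A (x1 i) - b)) :
    -- conclusion: for every feasible `x`
    ∀ x : EB d, Amul A x = b → (∀ j, f j x ≤ 0) →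
      (1 / (n : ℝ)) * ∑ i,
          ((g (x1 i) + ∑ i', h i' (x1 i i')) - (g x + ∑ i', h i' (x i'))
            + ⟪y1 i, Amul A (x1 i) - b⟫ + (β - ρy) * ‖Amul A (x1 i) - b‖ ^ 2
            + PsiAug β f (x1 i) zk
            + 1 / 2 * ((∑ i', η i' * ‖x1 i i' - x i'‖ ^ 2) - (∑ i', η i' * ‖xk i' - x i'‖ ^ 2)
                + ∑ i', (η i' - ℓ i') * ‖x1 i i' - xk i'‖ ^ 2)
            - β / 2 * (‖Amul A (x1 i) - b‖ ^ 2 - ‖Amul A xk - b‖ ^ 2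
                + ‖Amul A (x1 i - xk)‖ ^ 2))
        ≤ (1 - 1 / (n : ℝ)) * ((g xk + ∑ i', h i' (xk i')) - (g x + ∑ i', h i' (x i'))
            + ⟪yk, Amul A xk - b⟫ + β * ‖Amul A xk - b‖ ^ 2 + PsiAug β f xk zk) :=
  stmt18_general d hn β ρy hβ η ℓ g h f g' f' A b hgconv hhconv hfconv hg hf xk yk zk hzk hdesc x1
    y1 hx1 hx1min hy1

end
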